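/- For 1 < i ≤ κ and a candidate c_i ∈ P_i, a non-negative integer s_i is a left-PP-viable score for c_i if and only if there exist c_{i−1} ∈ P_{i−1} and an integer s_{i−1} with 0 ≤ s_{i−1} ≤ s* such that: (i) s_{i−1} is a left-PP-viable score for c_{i−1}; (ii) s_i − |V^{P_i}| equals the number of voters in V^{(P_{i−1},P_i)} who prefer c_i to c_{i−1}; and (iii) s_{i−1} + |V^{(P_{i−1},P_i)}| − (s_i − |V^{P_i}|) ≤ s*. -/

import Mathlib

/-- The vote `succ` is single-peaked with respect to the axis `lt`:
for all `a ◁ b ◁ c`, if `a ≻ b` then `b ≻ c`. -/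
def SinglePeakedWith {C : Type*} (succ lt : C → C → Prop) : Prop :=
  ∀ a b c : C, lt a b → lt b c → succ a b → succ b c

/-- Party-aligned single-peakedness of a single vote, where parties are indexed by
naturals and the party axis is the natural order of the indices: there is a
perceived candidate axis, compatible with the party axis, with respect to which
the vote is single-peaked. -/
def PASPVote {C : Type*} (party : C → ℕ) (succ : C → C → Prop) : Prop :=
  ∃ lt : C → C → Prop, IsStrictTotalOrder C lt ∧
    (∀ c c' : C, lt c c' → party c ≤ party c') ∧
    SinglePeakedWith succ lt

/-- A nomination scheme: one nominee of party `i` for each `i ∈ {1,…,k}`. -/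
def ValidNom {C : Type*} (party : C → ℕ) (k : ℕ) (nom : ℕ → C) : Prop :=
  ∀ i ∈ Finset.Icc 1 k, party (nom i) = i

/-- The set of voters whose favourite nominee is the nominee of party `i`. -/
def votesFor {C V : Type*} (succ : V → C → C → Prop) (k : ℕ) (nom : ℕ → C)
    (i : ℕ) : Set V :=
  {v | ∀ i' ∈ Finset.Icc 1 k, i' ≠ i → succ v (nom i) (nom i')}

/-- Plurality score of party `i`'s nominee in the reduced election. -/
noncomputable def score {C V : Type*} (succ : V → C → C → Prop) (k : ℕ)
    (nom : ℕ → C) (i : ℕ) : ℕ :=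
  (votesFor succ k nom i).ncard

/-- Party `i`'s nominee is a Plurality winner of the reduced election. -/
def IsWinner {C V : Type*} (succ : V → C → C → Prop) (k : ℕ) (nom : ℕ → C)
    (i : ℕ) : Prop :=
  ∀ i' ∈ Finset.Icc 1 k, score succ k nom i' ≤ score succ k nom i

/-- `c'` is a Nash deviation by party `i` for the nomination scheme `nom`. -/
def NashDeviation {C V : Type*} (party : C → ℕ) (succ : V → C → C → Prop)
    (k : ℕ) (nom : ℕ → C) (i : ℕ) (c' : C) : Prop :=
  party c' = i ∧ c' ≠ nom i ∧ ¬ IsWinner succ k nom i ∧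
    IsWinner succ k (Function.update nom i c') i

/-- A nomination scheme is a pure Nash equilibrium if no party has a Nash deviation. -/
def NashEq {C V : Type*} (party : C → ℕ) (succ : V → C → C → Prop) (k : ℕ)
    (nom : ℕ → C) : Prop :=
  ∀ i ∈ Finset.Icc 1 k, ∀ c' : C, ¬ NashDeviation party succ k nom i c'

/-- Voters who vote for party `i`'s nominee in every nomination scheme. -/
def AlwaysFor {C V : Type*} (party : C → ℕ) (succ : V → C → C → Prop)
    (k i : ℕ) : Set V :=
  {v | ∀ nom : ℕ → C, ValidNom party k nom → v ∈ votesFor succ k nom i}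

/-- Voters, not in `AlwaysFor i` or `AlwaysFor (i+1)`, who always vote for the
nominee of party `i` or of party `i+1`. -/
def BetweenFor {C V : Type*} (party : C → ℕ) (succ : V → C → C → Prop)
    (k i : ℕ) : Set V :=
  {v | v ∉ AlwaysFor party succ k i ∧ v ∉ AlwaysFor party succ k (i + 1) ∧
    ∀ nom : ℕ → C, ValidNom party k nom →
      (v ∈ votesFor succ k nom i ∨ v ∈ votesFor succ k nom (i + 1))}

/-- The voter set `V_{≤ i}`. -/
def Vle {C V : Type*} (party : C → ℕ) (succ : V → C → C → Prop)
    (k i : ℕ) : Set V :=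
  (⋃ j ∈ Finset.Icc 1 i, AlwaysFor party succ k j) ∪
    (⋃ j ∈ Finset.Icc 1 (i - 1), BetweenFor party succ k j)

/-- The voter set `V_{≥ i}`. -/
def Vge {C V : Type*} (party : C → ℕ) (succ : V → C → C → Prop)
    (k i : ℕ) : Set V :=
  (⋃ j ∈ Finset.Icc i k, AlwaysFor party succ k j) ∪
    (⋃ j ∈ Finset.Icc i (k - 1), BetweenFor party succ k j)

/-- `nom` extends the partial nomination scheme `cs` given on positions `1,…,i`. -/
def Extends {C : Type*} (i : ℕ) (cs nom : ℕ → C) : Prop :=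
  ∀ j ∈ Finset.Icc 1 i, nom j = cs j

/-- `nom` extends the partial nomination scheme `cs` given on positions `i,…,k`. -/
def ExtendsR {C : Type*} (i k : ℕ) (cs nom : ℕ → C) : Prop :=
  ∀ j ∈ Finset.Icc i k, nom j = cs j

/-- Number of votes obtained by party `j`'s nominee from the voters in `W`. -/
noncomputable def votesFrom {C V : Type*} (W : Set V) (succ : V → C → C → Prop)
    (k : ℕ) (nom : ℕ → C) (j : ℕ) : ℕ :=
  (W ∩ votesFor succ k nom j).ncard

/-- A left-feasible partial nomination scheme for `i` (with target score `sstar`):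
condition (α) plus the no-deviation condition (β). -/
def LeftFeasible {C V : Type*} (party : C → ℕ) (succ : V → C → C → Prop)
    (k sstar i : ℕ) (cs : ℕ → C) : Prop :=
  (∀ j ∈ Finset.Icc 1 i, party (cs j) = j) ∧
  ∀ nom : ℕ → C, ValidNom party k nom → Extends i cs nom →
    ∀ j ∈ Finset.Icc 1 (i - 1),
      votesFrom (Vle party succ k i) succ k nom j ≤ sstar ∧
      (votesFrom (Vle party succ k i) succ k nom j < sstar →
        ∀ c' : C, party c' = j → c' ≠ cs j →
          votesFrom (Vle party succ k i) succ k (Function.update nom j c') j < sstar)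

/-- A right-feasible partial nomination scheme for `i`. -/
def RightFeasible {C V : Type*} (party : C → ℕ) (succ : V → C → C → Prop)
    (k sstar i : ℕ) (cs : ℕ → C) : Prop :=
  (∀ j ∈ Finset.Icc i k, party (cs j) = j) ∧
  ∀ nom : ℕ → C, ValidNom party k nom → ExtendsR i k cs nom →
    ∀ j ∈ Finset.Icc (i + 1) k,
      votesFrom (Vge party succ k i) succ k nom j ≤ sstar ∧
      (votesFrom (Vge party succ k i) succ k nom j < sstar →
        ∀ c' : C, party c' = j → c' ≠ cs j →
          votesFrom (Vge party succ k i) succ k (Function.update nom j c') j < sstar)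

/-- A left-PP-feasible partial nomination scheme for `i`: only condition (α). -/
def LeftPPFeasible {C V : Type*} (party : C → ℕ) (succ : V → C → C → Prop)
    (k sstar i : ℕ) (cs : ℕ → C) : Prop :=
  (∀ j ∈ Finset.Icc 1 i, party (cs j) = j) ∧
  ∀ nom : ℕ → C, ValidNom party k nom → Extends i cs nom →
    ∀ j ∈ Finset.Icc 1 (i - 1),
      votesFrom (Vle party succ k i) succ k nom j ≤ sstar

/-- A right-PP-feasible partial nomination scheme for `i`. -/
def RightPPFeasible {C V : Type*} (party : C → ℕ) (succ : V → C → C → Prop)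
    (k sstar i : ℕ) (cs : ℕ → C) : Prop :=
  (∀ j ∈ Finset.Icc i k, party (cs j) = j) ∧
  ∀ nom : ℕ → C, ValidNom party k nom → ExtendsR i k cs nom →
    ∀ j ∈ Finset.Icc (i + 1) k,
      votesFrom (Vge party succ k i) succ k nom j ≤ sstar

/-- The pair `(s, s')` is left-viable for the candidate pair `(c, c')` of
parties `P_{i-1}` and `P_i`. -/
def LeftViablePair {C V : Type*} (party : C → ℕ) (succ : V → C → C → Prop)
    (k sstar i : ℕ) (c c' : C) (s s' : ℕ) : Prop :=
  ∃ cs : ℕ → C, LeftFeasible party succ k sstar i cs ∧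
    cs (i - 1) = c ∧ cs i = c' ∧
    ∀ nom : ℕ → C, ValidNom party k nom → Extends i cs nom →
      votesFrom (Vle party succ k i) succ k nom (i - 1) = s ∧
      votesFrom (Vle party succ k i) succ k nom i = s'

/-- `s` is a left-viable score for candidate `c` of party `P_i`. -/
def LeftViableScore {C V : Type*} (party : C → ℕ) (succ : V → C → C → Prop)
    (k sstar i : ℕ) (c : C) (s : ℕ) : Prop :=
  ∃ cs : ℕ → C, LeftFeasible party succ k sstar i cs ∧ cs i = c ∧
    ∀ nom : ℕ → C, ValidNom party k nom → Extends i cs nom →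
      votesFrom (Vle party succ k i) succ k nom i = s

/-- `s` is a right-viable score for candidate `c` of party `P_i`. -/
def RightViableScore {C V : Type*} (party : C → ℕ) (succ : V → C → C → Prop)
    (k sstar i : ℕ) (c : C) (s : ℕ) : Prop :=
  ∃ cs : ℕ → C, RightFeasible party succ k sstar i cs ∧ cs i = c ∧
    ∀ nom : ℕ → C, ValidNom party k nom → ExtendsR i k cs nom →
      votesFrom (Vge party succ k i) succ k nom i = s

/-- `s` is a left-PP-viable score for candidate `c` of party `P_i`. -/
def LeftPPViableScore {C V : Type*} (party : C → ℕ) (succ : V → C → C → Prop)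
    (k sstar i : ℕ) (c : C) (s : ℕ) : Prop :=
  ∃ cs : ℕ → C, LeftPPFeasible party succ k sstar i cs ∧ cs i = c ∧
    ∀ nom : ℕ → C, ValidNom party k nom → Extends i cs nom →
      votesFrom (Vle party succ k i) succ k nom i = s

/-- `s` is a right-PP-viable score for candidate `c` of party `P_i`. -/
def RightPPViableScore {C V : Type*} (party : C → ℕ) (succ : V → C → C → Prop)
    (k sstar i : ℕ) (c : C) (s : ℕ) : Prop :=
  ∃ cs : ℕ → C, RightPPFeasible party succ k sstar i cs ∧ cs i = c ∧
    ∀ nom : ℕ → C, ValidNom party k nom → ExtendsR i k cs nom →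
      votesFrom (Vge party succ k i) succ k nom i = s

/-!
A voter of `V_{≤ i}` votes for the nominee `c_m` of `P_m`, `m ≤ i`, exactly when it lies in
`V^{P_m}`, or in `V^{(P_{m-1},P_m)}` and prefers `c_m` to `c_{m-1}`, or (only if `m < i`) in
`V^{(P_m,P_{m+1})}` and prefers `c_m` to `c_{m+1}`. Hence enlarging `V_{≤ i-1}` to `V_{≤ i}`
leaves the scores of `c_1, …, c_{i-2}` unchanged, adds to `c_{i-1}` the voters of
`V^{(P_{i-1},P_i)}` preferring it to `c_i`, and gives `c_i` the voters of `V^{P_i}` and the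
rest of `V^{(P_{i-1},P_i)}`. So the left-PP-feasible schemes for `i` are those for `i - 1`
extended by a `c_i` for which this new score of `c_{i-1}` is at most `s*`, which is (iii).
-/
section LeftVoters

variable {C V : Type*} {party : C → ℕ} {succ : V → C → C → Prop} {k : ℕ} {nom : ℕ → C}
  [∀ v, Std.Asymm (succ v)]

theorem eq_of_mem_votesFor {j j' : ℕ} {v : V} (hj : j ∈ Finset.Icc 1 k)
    (hj' : j' ∈ Finset.Icc 1 k) (h : v ∈ votesFor succ k nom j)
    (h' : v ∈ votesFor succ k nom j') : j = j' :=
  by_contra fun hjj' => asymm (h j' hj' (Ne.symm hjj')) (h' j hj hjj')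

theorem mem_votesFor_iff_of_or {j j' : ℕ} {v : V} (hj : j ∈ Finset.Icc 1 k)
    (hj' : j' ∈ Finset.Icc 1 k) (hjj' : j ≠ j')
    (hv : v ∈ votesFor succ k nom j ∨ v ∈ votesFor succ k nom j') :
    v ∈ votesFor succ k nom j ↔ succ v (nom j) (nom j') :=
  ⟨fun h => h j' hj' hjj'.symm, fun h => hv.resolve_right fun h' => asymm h (h' j hj hjj')⟩

theorem disjoint_BetweenFor_succ {j : ℕ} (hj : 1 ≤ j) (hjk : j + 2 ≤ k) :
    Disjoint (BetweenFor party succ k j) (BetweenFor party succ k (j + 1)) := by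
  -- a voter in both would always vote for the nominee of `P_{j+1}`
  refine Set.disjoint_left.2 fun v hv hv' => hv'.1 fun nom hnom => ?_
  rcases hv'.2.2 nom hnom with h' | h'
  · exact h'
  rcases hv.2.2 nom hnom with h | h
  · exact absurd (eq_of_mem_votesFor (Finset.mem_Icc.2 ⟨hj, by omega⟩)
      (Finset.mem_Icc.2 ⟨by omega, hjk⟩) h h') (by omega)
  · exact h

theorem ncard_BetweenFor_eq_add [Finite V] (hnom : ValidNom party k nom) {j : ℕ}
    (hj : 1 ≤ j) (hjk : j + 1 ≤ k) :
    (BetweenFor party succ k j).ncard =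
      {v ∈ BetweenFor party succ k j | succ v (nom j) (nom (j + 1))}.ncard +
      {v ∈ BetweenFor party succ k j | succ v (nom (j + 1)) (nom j)}.ncard := by
  rw [← Set.ncard_union_eq ?_ (Set.toFinite _) (Set.toFinite _), ← Set.sep_or]
  · refine congrArg Set.ncard (Set.sep_eq_self_iff_mem_true.2 fun v hv => ?_).symm
    exact (hv.2.2 nom hnom).imp (fun h => h (j + 1) (Finset.mem_Icc.2 ⟨by omega, hjk⟩)
      (by omega)) fun h => h j (Finset.mem_Icc.2 ⟨hj, by omega⟩) (by omega)
  · exact Set.disjoint_left.2 fun _ h h' => asymm h.2 h'.2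

theorem Vle_inter_votesFor (hnom : ValidNom party k nom) {i m : ℕ} (hm : m ∈ Finset.Icc 1 i)
    (hik : i ≤ k) :
    Vle party succ k i ∩ votesFor succ k nom m =
      AlwaysFor party succ k m ∪
        {v ∈ BetweenFor party succ k (m - 1) | 2 ≤ m ∧ succ v (nom m) (nom (m - 1))} ∪
        {v ∈ BetweenFor party succ k m | m < i ∧ succ v (nom m) (nom (m + 1))} := by
  obtain ⟨hm1, hmi⟩ := Finset.mem_Icc.1 hm
  have hmk : m ∈ Finset.Icc 1 k := Finset.mem_Icc.2 ⟨hm1, by omega⟩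
  ext v
  constructor
  · rintro ⟨hA | hB, hvote⟩
    · obtain ⟨j, hj, hA⟩ := Set.mem_iUnion₂.1 hA
      obtain ⟨hj1, hji⟩ := Finset.mem_Icc.1 hj
      obtain rfl : j = m :=
        eq_of_mem_votesFor (Finset.mem_Icc.2 ⟨hj1, by omega⟩) hmk (hA nom hnom) hvote
      exact Or.inl (Or.inl hA)
    · obtain ⟨j, hj, hB⟩ := Set.mem_iUnion₂.1 hB
      obtain ⟨hj1, hji⟩ := Finset.mem_Icc.1 hj
      rcases hB.2.2 nom hnom with h | h
      · obtain rfl : j = m := eq_of_mem_votesFor (Finset.mem_Icc.2 ⟨hj1, by omega⟩) hmk h hvote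
        exact Or.inr ⟨hB, by omega, hvote (j + 1) (Finset.mem_Icc.2 ⟨by omega, by omega⟩)
          (by omega)⟩
      · obtain rfl : j + 1 = m :=
          eq_of_mem_votesFor (Finset.mem_Icc.2 ⟨by omega, by omega⟩) hmk h hvote
        exact Or.inl (Or.inr ⟨hB, by omega, hvote j (Finset.mem_Icc.2 ⟨hj1, by omega⟩)
          (by omega)⟩)
  · rintro ((hA | ⟨hB, h2, hpref⟩) | ⟨hB, hlt, hpref⟩)
    · exact ⟨Or.inl (Set.mem_iUnion₂.2 ⟨m, hm, hA⟩), hA nom hnom⟩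
    · obtain ⟨j, rfl⟩ : ∃ j, m = j + 1 := ⟨m - 1, by omega⟩
      rw [Nat.add_sub_cancel] at hB hpref
      refine ⟨Or.inr (Set.mem_iUnion₂.2 ⟨j, Finset.mem_Icc.2 ⟨by omega, by omega⟩, hB⟩), ?_⟩
      exact (mem_votesFor_iff_of_or hmk (Finset.mem_Icc.2 ⟨by omega, by omega⟩) (by omega)
        (hB.2.2 nom hnom).symm).2 hpref
    · refine ⟨Or.inr (Set.mem_iUnion₂.2 ⟨m, Finset.mem_Icc.2 ⟨hm1, by omega⟩, hB⟩), ?_⟩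
      exact (mem_votesFor_iff_of_or hmk (Finset.mem_Icc.2 ⟨by omega, by omega⟩) (by omega)
        (hB.2.2 nom hnom)).2 hpref

theorem votesFrom_Vle_succ_self [Finite V] (hnom : ValidNom party k nom) {j : ℕ} (hj : 1 ≤ j)
    (hjk : j + 1 ≤ k) :
    votesFrom (Vle party succ k (j + 1)) succ k nom (j + 1) =
      (AlwaysFor party succ k (j + 1)).ncard +
        {v ∈ BetweenFor party succ k j | succ v (nom (j + 1)) (nom j)}.ncard := by
  have hdisj : Disjoint (AlwaysFor party succ k (j + 1))
      {v ∈ BetweenFor party succ k j | succ v (nom (j + 1)) (nom j)} :=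
    Set.disjoint_left.2 fun _ hA hB => hB.1.2.1 hA
  rw [← Set.ncard_union_eq hdisj (Set.toFinite _) (Set.toFinite _), votesFrom,
    Vle_inter_votesFor hnom (Finset.mem_Icc.2 ⟨by omega, le_rfl⟩) hjk]
  simp only [Nat.add_sub_cancel, show 2 ≤ j + 1 by omega, true_and, lt_irrefl, false_and,
    Set.sep_false, Set.union_empty]

theorem votesFrom_Vle_succ_of_lt (hnom : ValidNom party k nom) {j m : ℕ} (hm : 1 ≤ m)
    (hmj : m < j) (hjk : j + 1 ≤ k) :
    votesFrom (Vle party succ k (j + 1)) succ k nom m =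
      votesFrom (Vle party succ k j) succ k nom m := by
  rw [votesFrom, votesFrom, Vle_inter_votesFor hnom (Finset.mem_Icc.2 ⟨hm, by omega⟩) hjk,
    Vle_inter_votesFor hnom (Finset.mem_Icc.2 ⟨hm, hmj.le⟩) (by omega)]
  simp only [hmj, show m < j + 1 by omega, true_and]

theorem votesFrom_Vle_congr {nom' : ℕ → C} (hnom : ValidNom party k nom)
    (hnom' : ValidNom party k nom') {i m : ℕ} (hm : m ∈ Finset.Icc 1 i) (hik : i ≤ k)
    (heq : ∀ j ∈ Finset.Icc 1 i, nom j = nom' j) :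
    votesFrom (Vle party succ k i) succ k nom m = votesFrom (Vle party succ k i) succ k nom' m := by
  obtain ⟨hm1, hmi⟩ := Finset.mem_Icc.1 hm
  rw [votesFrom, votesFrom, Vle_inter_votesFor hnom hm hik, Vle_inter_votesFor hnom' hm hik,
    heq m hm]
  congr 3 <;> ext v <;> refine and_congr_right fun _ => and_congr_right fun h => ?_
  · rw [heq (m - 1) (Finset.mem_Icc.2 ⟨by omega, by omega⟩)]
  · rw [heq (m + 1) (Finset.mem_Icc.2 ⟨by omega, by omega⟩)]

theorem votesFrom_Vle_succ_add [Finite V] (hnom : ValidNom party k nom) {j : ℕ} (hj : 1 ≤ j)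
    (hjk : j + 1 ≤ k) :
    votesFrom (Vle party succ k (j + 1)) succ k nom j +
        {v ∈ BetweenFor party succ k j | succ v (nom (j + 1)) (nom j)}.ncard =
      votesFrom (Vle party succ k j) succ k nom j + (BetweenFor party succ k j).ncard := by
  have hj' : j ∈ Finset.Icc 1 j := Finset.mem_Icc.2 ⟨hj, le_rfl⟩
  have hVle : Vle party succ k j ∩ votesFor succ k nom j = AlwaysFor party succ k j ∪
      {v ∈ BetweenFor party succ k (j - 1) | 2 ≤ j ∧ succ v (nom j) (nom (j - 1))} := by
    rw [Vle_inter_votesFor hnom hj' (by omega)]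
    simp only [lt_irrefl, false_and, Set.sep_false, Set.union_empty]
  have hVle_succ : Vle party succ k (j + 1) ∩ votesFor succ k nom j =
      (Vle party succ k j ∩ votesFor succ k nom j) ∪
        {v ∈ BetweenFor party succ k j | succ v (nom j) (nom (j + 1))} := by
    rw [hVle, Vle_inter_votesFor hnom (Finset.mem_Icc.2 ⟨hj, by omega⟩) hjk]
    simp only [Nat.lt_succ_self, true_and]
  have hdisj : Disjoint (Vle party succ k j ∩ votesFor succ k nom j)
      {v ∈ BetweenFor party succ k j | succ v (nom j) (nom (j + 1))} := by
    rw [hVle, Set.disjoint_union_left]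
    refine ⟨Set.disjoint_left.2 fun _ hA hB => hB.1.1 hA, Set.disjoint_left.2 ?_⟩
    rintro v ⟨hB', h2, -⟩ ⟨hB, -⟩
    obtain ⟨j, rfl⟩ : ∃ j', j = j' + 1 := ⟨j - 1, by omega⟩
    rw [Nat.add_sub_cancel] at hB'
    exact Set.disjoint_left.1 (disjoint_BetweenFor_succ (by omega) (by omega)) hB' hB
  rw [votesFrom, votesFrom, hVle_succ, Set.ncard_union_eq hdisj (Set.toFinite _) (Set.toFinite _),
    ncard_BetweenFor_eq_add hnom hj hjk, add_assoc]

end LeftVoters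

section Nominations

variable {C V : Type*} {party : C → ℕ} {succ : V → C → C → Prop} {k : ℕ}

theorem exists_validNom_extends (hne : ∀ i ∈ Finset.Icc 1 k, ∃ c : C, party c = i) {i : ℕ}
    {cs : ℕ → C} (hcs : ∀ j ∈ Finset.Icc 1 i, party (cs j) = j) :
    ∃ nom, ValidNom party k nom ∧ Extends i cs nom := by
  choose f hf using hne
  refine ⟨fun j => if h : j ∈ Finset.Icc 1 k ∧ i < j then f j h.1 else cs j,
    fun j hj => ?_, fun j hj => dif_neg ?_⟩
  · by_cases hij : i < j
    · simp only [dif_pos (And.intro hj hij), hf]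
    · dsimp only
      rw [dif_neg (by tauto)]
      exact hcs j (Finset.mem_Icc.2 ⟨(Finset.mem_Icc.1 hj).1, by omega⟩)
  · rw [Finset.mem_Icc] at hj
    omega

theorem ValidNom.update {nom : ℕ → C} (hnom : ValidNom party k nom) {i : ℕ} {c : C}
    (hc : party c = i) : ValidNom party k (Function.update nom i c) := by
  intro j hj
  rcases eq_or_ne j i with rfl | hji
  · rwa [Function.update_self]
  · rw [Function.update_of_ne hji]
    exact hnom j hj

theorem extends_succ_iff {j : ℕ} {cs nom : ℕ → C} :
    Extends (j + 1) cs nom ↔ Extends j cs nom ∧ nom (j + 1) = cs (j + 1) := by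
  simp only [Extends, Finset.mem_Icc]
  refine ⟨fun h => ⟨fun l hl => h l ⟨hl.1, by omega⟩, h (j + 1) ⟨by omega, le_rfl⟩⟩, ?_⟩
  rintro ⟨h, hj⟩ l ⟨hl1, hl⟩
  rcases Nat.lt_or_eq_of_le hl with hl | rfl
  · exact h l ⟨hl1, by omega⟩
  · exact hj

theorem Extends.update_succ {j : ℕ} {cs nom : ℕ → C} (hext : Extends j cs nom) (c : C) :
    Extends j cs (Function.update nom (j + 1) c) := fun l hl => by
  rw [Function.update_of_ne (by rw [Finset.mem_Icc] at hl; omega)]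
  exact hext l hl

theorem extends_update_succ_iff {j : ℕ} {cs nom : ℕ → C} {c : C} :
    Extends j (Function.update cs (j + 1) c) nom ↔ Extends j cs nom :=
  forall₂_congr fun l hl => by
    rw [Function.update_of_ne (by rw [Finset.mem_Icc] at hl; omega)]

theorem leftPPFeasible_update_succ_iff {sstar j : ℕ} {cs : ℕ → C} {c : C} :
    LeftPPFeasible party succ k sstar j (Function.update cs (j + 1) c) ↔
      LeftPPFeasible party succ k sstar j cs := by
  simp only [LeftPPFeasible, extends_update_succ_iff]
  refine and_congr_left' (forall₂_congr fun l hl => ?_)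
  rw [Function.update_of_ne (by rw [Finset.mem_Icc] at hl; omega)]

end Nominations

section LeftPPViable

variable {C V : Type*} {party : C → ℕ} {succ : V → C → C → Prop} {k : ℕ}
  [∀ v, Std.Asymm (succ v)]

theorem leftPPFeasible_succ_iff {sstar j : ℕ} {cs : ℕ → C}
    (hj : 1 ≤ j) (hjk : j + 1 ≤ k) :
    LeftPPFeasible party succ k sstar (j + 1) cs ↔
      LeftPPFeasible party succ k sstar j cs ∧ party (cs (j + 1)) = j + 1 ∧
        ∀ nom, ValidNom party k nom → Extends (j + 1) cs nom →
          votesFrom (Vle party succ k (j + 1)) succ k nom j ≤ sstar := by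
  constructor
  · rintro ⟨hparty, hbound⟩
    have hparty_succ := hparty (j + 1) (Finset.mem_Icc.2 ⟨by omega, le_rfl⟩)
    refine ⟨⟨fun m hm => hparty m (Finset.Icc_subset_Icc_right (by omega) hm),
      fun nom hnom hext m hm => ?_⟩, hparty_succ,
      fun nom hnom hext => hbound nom hnom hext j (Finset.mem_Icc.2 ⟨hj, by omega⟩)⟩
    obtain ⟨hm1, hmj⟩ := Finset.mem_Icc.1 hm
    set nom' := Function.update nom (j + 1) (cs (j + 1))
    have hnom' : ValidNom party k nom' := hnom.update hparty_succ
    have hext' : Extends (j + 1) cs nom' :=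
      extends_succ_iff.2 ⟨hext.update_succ _, Function.update_self ..⟩
    calc votesFrom (Vle party succ k j) succ k nom m
        = votesFrom (Vle party succ k j) succ k nom' m :=
          votesFrom_Vle_congr hnom hnom' (Finset.mem_Icc.2 ⟨hm1, by omega⟩) (by omega)
            fun l hl => (Function.update_of_ne (by rw [Finset.mem_Icc] at hl; omega) _ _).symm
      _ = votesFrom (Vle party succ k (j + 1)) succ k nom' m :=
          (votesFrom_Vle_succ_of_lt hnom' hm1 (by omega) hjk).symm
      _ ≤ sstar := hbound nom' hnom' hext' m (Finset.mem_Icc.2 ⟨hm1, by omega⟩)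
  · rintro ⟨⟨hparty, hbound⟩, hparty_succ, hbound_succ⟩
    refine ⟨fun m hm => ?_, fun nom hnom hext m hm => ?_⟩
    · obtain ⟨hm1, hmj⟩ := Finset.mem_Icc.1 hm
      rcases Nat.lt_or_eq_of_le hmj with hmj | rfl
      · exact hparty m (Finset.mem_Icc.2 ⟨hm1, by omega⟩)
      · exact hparty_succ
    · obtain ⟨hm1, hmj⟩ := Finset.mem_Icc.1 hm
      rcases Nat.lt_or_eq_of_le (show m ≤ j by omega) with hmj | rfl
      · rw [votesFrom_Vle_succ_of_lt hnom hm1 hmj hjk]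
        exact hbound nom hnom (extends_succ_iff.1 hext).1 m
          (Finset.mem_Icc.2 ⟨hm1, by omega⟩)
      · exact hbound_succ nom hnom hext

theorem LeftPPViableScore.exists_pred [Finite V]
    (hne : ∀ i ∈ Finset.Icc 1 k, ∃ c : C, party c = i) {sstar j : ℕ} (hj : 1 ≤ j)
    (hjk : j + 1 ≤ k) {c : C} {s : ℕ} (h : LeftPPViableScore party succ k sstar (j + 1) c s) :
    ∃ c' : C, party c' = j ∧ ∃ s' : ℕ, s' ≤ sstar ∧
      LeftPPViableScore party succ k sstar j c' s' ∧
      s = (AlwaysFor party succ k (j + 1)).ncard +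
        {v ∈ BetweenFor party succ k j | succ v c c'}.ncard ∧
      s' + (BetweenFor party succ k j).ncard ≤ sstar +
        {v ∈ BetweenFor party succ k j | succ v c c'}.ncard := by
  obtain ⟨cs, hfeas, rfl, hscore⟩ := h
  obtain ⟨hfeas_j, -, hbound⟩ := (leftPPFeasible_succ_iff hj hjk).1 hfeas
  obtain ⟨nom, hnom, hext⟩ := exists_validNom_extends hne hfeas.1
  obtain ⟨hext_j, hnom_succ⟩ := extends_succ_iff.1 hext
  have hnom_j := hext_j j (Finset.mem_Icc.2 ⟨hj, le_rfl⟩)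
  have hsplit := votesFrom_Vle_succ_add (succ := succ) hnom hj hjk
  have hpref_le : {v ∈ BetweenFor party succ k j | succ v (nom (j + 1)) (nom j)}.ncard ≤
      (BetweenFor party succ k j).ncard := Set.ncard_le_ncard (Set.sep_subset _ _)
  have hle := hbound nom hnom hext
  rw [hnom_j, hnom_succ] at hsplit hpref_le
  refine ⟨cs j, hfeas_j.1 j (Finset.mem_Icc.2 ⟨hj, le_rfl⟩),
    votesFrom (Vle party succ k j) succ k nom j, by omega,
    ⟨cs, hfeas_j, rfl, fun nom' hnom' hext' => votesFrom_Vle_congr hnom' hnom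
      (Finset.mem_Icc.2 ⟨hj, le_rfl⟩) (by omega) fun l hl => (hext' l hl).trans (hext_j l hl).symm⟩,
    ?_, by omega⟩
  rw [← hscore nom hnom hext, votesFrom_Vle_succ_self hnom hj hjk, hnom_j, hnom_succ]

theorem LeftPPViableScore.extend [Finite V] {sstar j : ℕ}
    (hj : 1 ≤ j) (hjk : j + 1 ≤ k) {c c' : C} (hc : party c = j + 1) {s' : ℕ}
    (h : LeftPPViableScore party succ k sstar j c' s')
    (hle : s' + (BetweenFor party succ k j).ncard ≤ sstar +
      {v ∈ BetweenFor party succ k j | succ v c c'}.ncard) :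
    LeftPPViableScore party succ k sstar (j + 1) c
      ((AlwaysFor party succ k (j + 1)).ncard +
        {v ∈ BetweenFor party succ k j | succ v c c'}.ncard) := by
  obtain ⟨cs, hfeas, rfl, hscore⟩ := h
  have hvotes : ∀ nom, Extends (j + 1) (Function.update cs (j + 1) c) nom →
      Extends j cs nom ∧ nom j = cs j ∧ nom (j + 1) = c := fun nom hext => by
    obtain ⟨hext_j, hnom_succ⟩ := extends_succ_iff.1 hext
    rw [extends_update_succ_iff] at hext_j
    exact ⟨hext_j, hext_j j (Finset.mem_Icc.2 ⟨hj, le_rfl⟩),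
      hnom_succ.trans (Function.update_self ..)⟩
  refine ⟨Function.update cs (j + 1) c, (leftPPFeasible_succ_iff hj hjk).2
    ⟨leftPPFeasible_update_succ_iff.2 hfeas, by rwa [Function.update_self],
      fun nom hnom hext => ?_⟩, Function.update_self .., fun nom hnom hext => ?_⟩
  all_goals obtain ⟨hext_j, hnom_j, hnom_succ⟩ := hvotes nom hext
  · have hsplit := votesFrom_Vle_succ_add (succ := succ) hnom hj hjk
    rw [hnom_j, hnom_succ, hscore nom hnom hext_j] at hsplit
    omega
  · rw [votesFrom_Vle_succ_self hnom hj hjk, hnom_j, hnom_succ]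

end LeftPPViable

theorem PPviable_score_recursion_general
    {C V : Type*} [Fintype V] {k : ℕ}
    (party : C → ℕ)
    (hne : ∀ i ∈ Finset.Icc 1 k, ∃ c : C, party c = i)
    (succ : V → C → C → Prop) (hsto : ∀ v : V, IsStrictTotalOrder C (succ v))
    (sstar : ℕ) (i : ℕ) (hi1 : 1 < i) (hik : i ≤ k)
    (ci : C) (hci : party ci = i) (si : ℕ) :
    LeftPPViableScore party succ k sstar i ci si ↔
      ∃ c' : C, party c' = i - 1 ∧ ∃ s' : ℕ, s' ≤ sstar ∧
        LeftPPViableScore party succ k sstar (i - 1) c' s' ∧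
        si = (AlwaysFor party succ k i).ncard +
          {v ∈ BetweenFor party succ k (i - 1) | succ v ci c'}.ncard ∧
        s' + (BetweenFor party succ k (i - 1)).ncard ≤ sstar +
          {v ∈ BetweenFor party succ k (i - 1) | succ v ci c'}.ncard := by
  obtain ⟨j, rfl⟩ : ∃ j, i = j + 1 := ⟨i - 1, by omega⟩
  have : ∀ v, Std.Asymm (succ v) := fun v => have := hsto v; inferInstance
  simp only [Nat.add_sub_cancel]
  refine ⟨fun h => h.exists_pred hne (by omega) hik, ?_⟩
  rintro ⟨c', -, s', -, h, rfl, hle⟩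
  exact h.extend (by omega) hik hci hle

/-- Recursion for left-PP-viable scores: for `1 < i ≤ κ ≤ k` and `c_i ∈ P_i`,
`s_i` is a left-PP-viable score for `c_i` iff there exist `c_{i-1} ∈ P_{i-1}`
and `s_{i-1} ≤ s*` such that (i) `s_{i-1}` is left-PP-viable for `c_{i-1}`,
(ii) `s_i − |V^{P_i}|` equals the number of voters of `V^{(P_{i-1},P_i)}`
preferring `c_i` to `c_{i-1}`, and (iii)
`s_{i-1} + |V^{(P_{i-1},P_i)}| − (s_i − |V^{P_i}|) ≤ s*`. -/
theorem PPviable_score_recursion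
    {C V : Type*} [Fintype C] [Fintype V] {k : ℕ}
    (party : C → ℕ) (hpr : ∀ c : C, party c ∈ Finset.Icc 1 k)
    (hne : ∀ i ∈ Finset.Icc 1 k, ∃ c : C, party c = i)
    (succ : V → C → C → Prop) (hsto : ∀ v : V, IsStrictTotalOrder C (succ v))
    (hPASP : ∀ v : V, PASPVote party (succ v))
    (sstar : ℕ) (i : ℕ) (hi1 : 1 < i) (hik : i ≤ k)
    (ci : C) (hci : party ci = i) (si : ℕ) :
    LeftPPViableScore party succ k sstar i ci si ↔
      ∃ c' : C, party c' = i - 1 ∧ ∃ s' : ℕ, s' ≤ sstar ∧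
        LeftPPViableScore party succ k sstar (i - 1) c' s' ∧
        si = (AlwaysFor party succ k i).ncard +
          {v ∈ BetweenFor party succ k (i - 1) | succ v ci c'}.ncard ∧
        s' + (BetweenFor party succ k (i - 1)).ncard ≤ sstar +
          {v ∈ BetweenFor party succ k (i - 1) | succ v ci c'}.ncard :=
  PPviable_score_recursion_general party hne succ hsto sstar i hi1 hik ci hci si
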